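/- Let α ∈ RO and suppose ∫₁^∞ t^{n-1} α(t)^{-2} dt < ∞. Then every element of H^α(ℝⁿ) has Fourier transform in L¹(ℝⁿ) and hence is (equal a.e. to) a bounded continuous function, with ‖w‖_∞ ≤ C‖w‖_α for some constant C independent of w. -/

import Mathlib

noncomputable section
open MeasureTheory Filter Set Real

/-- Class RO of RO-varying (in the sense of Avakumović) functions at infinity:
Borel measurable on `[1,∞)`, positive there, with `c⁻¹ ≤ α(l*t)/α(t) ≤ c`
for all `t ≥ 1`, `l ∈ [1,b]`. -/
def RO (α : ℝ → ℝ) : Prop :=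
  (∀ t, 1 ≤ t → 0 < α t) ∧ (Measurable fun t : Set.Ici (1:ℝ) => α t.1) ∧
  ∃ b : ℝ, 1 < b ∧ ∃ c : ℝ, 1 ≤ c ∧ ∀ t, 1 ≤ t → ∀ l, 1 ≤ l → l ≤ b →
    c⁻¹ ≤ α (l * t) / α t ∧ α (l * t) / α t ≤ c

/-- Exponents admitting a lower power bound `c * l^s ≤ α(l*t)/α(t)`. -/
def roLowerSet (α : ℝ → ℝ) : Set ℝ :=
  {s | ∃ c : ℝ, 0 < c ∧ ∀ t, 1 ≤ t → ∀ l, 1 ≤ l → c * l ^ s ≤ α (l * t) / α t}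

/-- Exponents admitting an upper power bound `α(l*t)/α(t) ≤ c * l^s`. -/
def roUpperSet (α : ℝ → ℝ) : Set ℝ :=
  {s | ∃ c : ℝ, 0 < c ∧ ∀ t, 1 ≤ t → ∀ l, 1 ≤ l → α (l * t) / α t ≤ c * l ^ s}

/-- Lower Matuszewska index. -/
def sigma0 (α : ℝ → ℝ) : ℝ := sSup (roLowerSet α)

/-- Upper Matuszewska index. -/
def sigma1 (α : ℝ → ℝ) : ℝ := sInf (roUpperSet α)

open scoped ENNReal NNReal

abbrev Eucl (n : ℕ) := EuclideanSpace ℝ (Fin n)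

/-- The smoothed modulus `⟨ξ⟩ = (1+|ξ|²)^{1/2}`. -/
def jap {n : ℕ} (ξ : Eucl n) : ℝ := Real.sqrt (1 + ‖ξ‖ ^ 2)

/-- The norm of the generalized Sobolev space `H^α(ℝⁿ)` computed on the
Fourier-transform side: `‖w‖_α = (∫ α(⟨ξ⟩)² |ŵ(ξ)|² dξ)^{1/2}`, as an `ℝ≥0∞` value. -/
def HnormE {n : ℕ} (α : ℝ → ℝ) (W : Eucl n → ℂ) : ℝ≥0∞ :=
  (∫⁻ ξ, ENNReal.ofReal ((α (jap ξ)) ^ 2) * (‖W ξ‖₊ : ℝ≥0∞) ^ 2) ^ (1/2 : ℝ)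

open scoped FourierTransform

/-!
Weighted Cauchy–Schwarz gives `∫ |W| ≤ (∫ α(⟨ξ⟩)⁻²)^{1/2} ‖w‖_α`, and the inverse Fourier
transform of an `L¹` function is continuous with sup norm at most its `L¹` norm. The weight
`α(⟨ξ⟩)⁻²` is radial, so in polar coordinates its integrability reduces to that of
`r^{n-1} α(⟨r⟩)⁻²` on `(0, ∞)`. Since `max r 1 ≤ ⟨r⟩ ≤ √2 max r 1`, finitely many applications
of the RO bound give `α(⟨r⟩) ≥ C α(max r 1)`: the integrand is bounded on `(0, 1]` and
dominated by `C⁻² r^{n-1} α(r)⁻²` on `(1, ∞)`.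
-/

theorem one_le_sqrt_one_add_sq (r : ℝ) : 1 ≤ √(1 + r ^ 2) :=
  Real.one_le_sqrt.2 (le_add_of_nonneg_right (sq_nonneg r))

theorem sqrt_one_add_sq_mem_Icc {r : ℝ} (hr : 0 ≤ r) :
    √(1 + r ^ 2) ∈ Icc (max r 1) (√2 * max r 1) := by
  have hr1 : r ≤ max r 1 := le_max_left _ _
  have h1 : 1 ≤ max r 1 := le_max_right _ _
  refine ⟨max_le ((Real.le_sqrt hr (by positivity)).2 (by linarith)) (one_le_sqrt_one_add_sq r),
    Real.sqrt_le_iff.2 ⟨by positivity, ?_⟩⟩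
  rw [mul_pow, Real.sq_sqrt zero_le_two]
  nlinarith

theorem one_le_jap {n : ℕ} (ξ : Eucl n) : 1 ≤ jap ξ := one_le_sqrt_one_add_sq ‖ξ‖

theorem continuous_jap {n : ℕ} : Continuous (jap (n := n)) := by
  unfold jap
  fun_prop

theorem lintegral_enorm_le_mul_weighted {X E : Type*} [MeasurableSpace X] [NormedAddCommGroup E]
    {μ : Measure X} {w : X → ℝ} (hw : AEMeasurable w μ) (hpos : ∀ x, 0 < w x) {f : X → E}
    (hf : AEStronglyMeasurable f μ) :
    ∫⁻ x, ‖f x‖ₑ ∂μ ≤ (∫⁻ x, ENNReal.ofReal ((w x)⁻¹ ^ 2) ∂μ) ^ (1 / 2 : ℝ) *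
      (∫⁻ x, ENNReal.ofReal (w x ^ 2) * ‖f x‖ₑ ^ 2 ∂μ) ^ (1 / 2 : ℝ) := by
  have hsplit : ∀ x, ‖f x‖ₑ = ENNReal.ofReal (w x)⁻¹ * (ENNReal.ofReal (w x) * ‖f x‖ₑ) := by
    intro x
    rw [← mul_assoc, ← ENNReal.ofReal_mul (inv_nonneg.2 (hpos x).le),
      inv_mul_cancel₀ (hpos x).ne', ENNReal.ofReal_one, one_mul]
  calc ∫⁻ x, ‖f x‖ₑ ∂μ
      = ∫⁻ x, ENNReal.ofReal (w x)⁻¹ * (ENNReal.ofReal (w x) * ‖f x‖ₑ) ∂μ :=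
        lintegral_congr hsplit
    _ ≤ (∫⁻ x, ENNReal.ofReal (w x)⁻¹ ^ (2 : ℝ) ∂μ) ^ (1 / 2 : ℝ) *
          (∫⁻ x, (ENNReal.ofReal (w x) * ‖f x‖ₑ) ^ (2 : ℝ) ∂μ) ^ (1 / 2 : ℝ) :=
        ENNReal.lintegral_mul_le_Lp_mul_Lq μ Real.HolderConjugate.two_two
          hw.inv.ennreal_ofReal (hw.ennreal_ofReal.mul hf.enorm)
    _ = _ := by
        simp only [ENNReal.rpow_two, mul_pow,
          ← ENNReal.ofReal_pow (inv_nonneg.2 (hpos _).le), ← ENNReal.ofReal_pow (hpos _).le]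

section Fourier

variable {V E : Type*} [NormedAddCommGroup V] [InnerProductSpace ℝ V] [MeasurableSpace V]
  [BorelSpace V] [FiniteDimensional ℝ V] [NormedAddCommGroup E] [NormedSpace ℂ E]

theorem MeasureTheory.Integrable.continuous_fourierInv {f : V → E} (hf : Integrable f) :
    Continuous (𝓕⁻ f) :=
  VectorFourier.fourierIntegral_continuous Real.continuous_fourierChar continuous_inner.neg hf

theorem norm_fourierInv_le_integral_norm (f : V → E) (x : V) : ‖𝓕⁻ f x‖ ≤ ∫ v, ‖f v‖ :=
  VectorFourier.norm_fourierIntegral_le_integral_norm _ _ _ _ _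

end Fourier

namespace RO

variable {α : ℝ → ℝ}

theorem measurable_comp (hα : RO α) {X : Type*} [MeasurableSpace X] {f : X → ℝ}
    (hf : Measurable f) (hf1 : ∀ x, 1 ≤ f x) : Measurable fun x => α (f x) :=
  hα.2.1.comp (hf.subtype_mk (p := (· ∈ Ici (1 : ℝ))) (h := hf1))

theorem exists_pos_mul_le_apply_mul (hα : RO α) (L : ℝ) :
    ∃ C, 0 < C ∧ ∀ t, 1 ≤ t → ∀ l, 1 ≤ l → l ≤ L → C * α t ≤ α (l * t) := by
  obtain ⟨hpos, -, b, hb, c, hc, hratio⟩ := hα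
  have hb0 : 0 < b := one_pos.trans hb
  have hstep : ∀ t, 1 ≤ t → ∀ l, 1 ≤ l → l ≤ b → c⁻¹ * α t ≤ α (l * t) := fun t ht l hl hlb =>
    (le_div_iff₀ (hpos t ht)).1 (hratio t ht l hl hlb).1
  have hiter : ∀ k : ℕ, ∀ t, 1 ≤ t → ∀ l, 1 ≤ l → l ≤ b ^ k → c⁻¹ ^ k * α t ≤ α (l * t) := by
    intro k
    induction k with
    | zero =>
      intro t _ l hl hlk
      rw [le_antisymm (by simpa using hlk) hl]
      simp
    | succ k ih =>
      intro t ht l hl hlk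
      -- factor `l = (l / m) * m` with `m ∈ [1, b ^ k]` and `l / m ∈ [1, b]`
      set m := max 1 (l / b)
      have hm1 : 1 ≤ m := le_max_left _ _
      have hm0 : 0 < m := one_pos.trans_le hm1
      have hmk : m ≤ b ^ k := max_le (one_le_pow₀ hb.le)
        (by rw [div_le_iff₀ hb0, ← pow_succ]; exact hlk)
      have hlm1 : 1 ≤ l / m := (one_le_div hm0).2 (max_le hl (div_le_self (by linarith) hb.le))
      have hlmb : l / m ≤ b := (div_le_iff₀ hm0).2 (by
        rw [← div_le_iff₀' hb0]; exact le_max_right _ _)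
      calc c⁻¹ ^ (k + 1) * α t = c⁻¹ * (c⁻¹ ^ k * α t) := by ring
        _ ≤ c⁻¹ * α (m * t) := by gcongr; exact ih t ht m hm1 hmk
        _ ≤ α (l / m * (m * t)) := hstep _ (one_le_mul_of_one_le_of_one_le hm1 ht) _ hlm1 hlmb
        _ = α (l * t) := by rw [← mul_assoc, div_mul_cancel₀ _ hm0.ne']
  obtain ⟨k, hk⟩ := pow_unbounded_of_one_lt L hb
  exact ⟨c⁻¹ ^ k, by have := one_pos.trans_le hc; positivity,
    fun t ht l hl hlL => hiter k t ht l hl (hlL.trans hk.le)⟩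

theorem exists_pos_mul_apply_max_le_apply_sqrt (hα : RO α) :
    ∃ C, 0 < C ∧ ∀ r, 0 ≤ r → C * α (max r 1) ≤ α √(1 + r ^ 2) := by
  obtain ⟨C, hC, hdil⟩ := hα.exists_pos_mul_le_apply_mul √2
  refine ⟨C, hC, fun r hr => ?_⟩
  obtain ⟨hlow, hupp⟩ := sqrt_one_add_sq_mem_Icc hr
  have hs : 0 < max r 1 := one_pos.trans_le (le_max_right _ _)
  have := hdil (max r 1) (le_max_right _ _) (√(1 + r ^ 2) / max r 1) ((one_le_div hs).2 hlow)
    ((div_le_iff₀ hs).2 hupp)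
  rwa [div_mul_cancel₀ _ hs.ne'] at this

theorem integrableOn_pow_mul_inv_apply_sqrt_sq (hα : RO α) {n : ℕ} (hn : 1 ≤ n)
    (hint : IntegrableOn (fun t : ℝ => t ^ ((n : ℝ) - 1) * (α t)⁻¹ ^ 2) (Ici 1)) :
    IntegrableOn (fun r : ℝ => r ^ (n - 1) * (α √(1 + r ^ 2))⁻¹ ^ 2) (Ioi 0) := by
  obtain ⟨C, hC, hcmp⟩ := hα.exists_pos_mul_apply_max_le_apply_sqrt
  have hmeas : AEStronglyMeasurable (fun r : ℝ => r ^ (n - 1) * (α √(1 + r ^ 2))⁻¹ ^ 2) :=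
    ((measurable_id.pow_const _).mul ((hα.measurable_comp (by fun_prop)
      one_le_sqrt_one_add_sq).inv.pow_const 2)).aestronglyMeasurable
  have hbound : ∀ r, 0 ≤ r →
      ‖r ^ (n - 1) * (α √(1 + r ^ 2))⁻¹ ^ 2‖ ≤ r ^ (n - 1) * (C⁻¹ * (α (max r 1))⁻¹) ^ 2 := by
    intro r hr
    have hpos : 0 < α (max r 1) := hα.1 _ (le_max_right _ _)
    have hpos' : 0 < α √(1 + r ^ 2) := hα.1 _ (one_le_sqrt_one_add_sq r)
    rw [Real.norm_of_nonneg (by positivity), ← mul_inv]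
    gcongr
    exact hcmp r hr
  rw [← Ioc_union_Ioi_eq_Ioi zero_le_one]
  refine IntegrableOn.union ?_ ?_
  · refine Measure.integrableOn_of_bounded (M := (C⁻¹ * (α 1)⁻¹) ^ 2) measure_Ioc_lt_top.ne hmeas
      (ae_restrict_of_forall_mem measurableSet_Ioc fun r hr => (hbound r hr.1.le).trans ?_)
    rw [max_eq_right hr.2]
    exact mul_le_of_le_one_left (by positivity) (pow_le_one₀ hr.1.le hr.2)
  · refine ((hint.mono_set Ioi_subset_Ici_self).const_mul (C⁻¹ ^ 2)).mono' hmeas.restrict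
      (ae_restrict_of_forall_mem measurableSet_Ioi fun r hr =>
        (hbound r (zero_le_one.trans hr.le)).trans_eq ?_)
    rw [max_eq_left hr.le, ← Real.rpow_natCast, Nat.cast_sub hn, Nat.cast_one]
    ring

theorem integrable_inv_apply_jap_sq (hα : RO α) {n : ℕ} (hn : 1 ≤ n)
    (hint : IntegrableOn (fun t : ℝ => t ^ ((n : ℝ) - 1) * (α t)⁻¹ ^ 2) (Ici 1)) :
    Integrable fun ξ : Eucl n => (α (jap ξ))⁻¹ ^ 2 := by
  have : Nonempty (Fin n) := ⟨⟨0, hn⟩⟩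
  have hpolar := integrable_fun_norm_addHaar volume (E := Eucl n)
    (f := fun r : ℝ => (α √(1 + r ^ 2))⁻¹ ^ 2)
  simp only [finrank_euclideanSpace_fin, smul_eq_mul] at hpolar
  exact hpolar.2 (hα.integrableOn_pow_mul_inv_apply_sqrt_sq hn hint)

end RO

/-- If `∫₁^∞ t^{n-1} α(t)⁻² dt < ∞`, then every `w ∈ H^α(ℝⁿ)` (given on the Fourier
side by `W = ŵ`, so `w = 𝓕⁻ W`) has Fourier transform in `L¹`, hence is a bounded
continuous function with `‖w‖_∞ ≤ C ‖w‖_α`. -/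
theorem halpha_bounded_continuous (n : ℕ) (hn : 1 ≤ n) (α : ℝ → ℝ) (hα : RO α)
    (hint : IntegrableOn
      (fun t : ℝ => t ^ ((n : ℝ) - 1) * ((α t)⁻¹) ^ 2) (Set.Ici 1)) :
    ∃ C : ℝ, 0 < C ∧ ∀ W : Eucl n → ℂ, Measurable W → HnormE α W < ⊤ →
      Integrable W ∧ Continuous (𝓕⁻ W) ∧
      ∀ x : Eucl n, ‖(𝓕⁻ W) x‖ ≤ C * (HnormE α W).toReal := by
  set K := (∫⁻ ξ : Eucl n, ENNReal.ofReal ((α (jap ξ))⁻¹ ^ 2)) ^ (1 / 2 : ℝ)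
  have hK : K < ⊤ := ENNReal.rpow_lt_top_of_nonneg (by norm_num)
    (hα.integrable_inv_apply_jap_sq hn hint).lintegral_lt_top.ne
  refine ⟨K.toReal + 1, by positivity, fun W hW hWα => ?_⟩
  have hL1 : ∫⁻ ξ, ‖W ξ‖ₑ ≤ K * HnormE α W :=
    lintegral_enorm_le_mul_weighted
      (hα.measurable_comp continuous_jap.measurable one_le_jap).aemeasurable
      (fun ξ => hα.1 _ (one_le_jap ξ)) hW.aestronglyMeasurable
  have hWint : Integrable W :=
    ⟨hW.aestronglyMeasurable, hL1.trans_lt (ENNReal.mul_lt_top hK hWα)⟩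
  refine ⟨hWint, hWint.continuous_fourierInv, fun x => ?_⟩
  calc ‖𝓕⁻ W x‖ ≤ ∫ ξ, ‖W ξ‖ := norm_fourierInv_le_integral_norm W x
    _ = (∫⁻ ξ, ‖W ξ‖ₑ).toReal := integral_norm_eq_lintegral_enorm hW.aestronglyMeasurable
    _ ≤ K.toReal * (HnormE α W).toReal :=
      ENNReal.toReal_mul ▸ ENNReal.toReal_mono (ENNReal.mul_lt_top hK hWα).ne hL1
    _ ≤ (K.toReal + 1) * (HnormE α W).toReal := by gcongr; linarith
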